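/- The function Q(x) = e^{ψ(x+1)} − x is strictly convex on the interval (−1, ∞). -/

import Mathlib

/-!
On `(0, ∞)` we have `ψ' = ∑ₖ (x + k)⁻²` and `ψ'' = -2 ∑ₖ (x + k)⁻³`, and
`Q'' x = e^{ψ (x + 1)} Φ (x + 1)` with `Φ = ψ'² + ψ''`, so it suffices that `Φ > 0`.
The recurrences `ψ' y = y⁻² + ψ' (y + 1)`, `ψ'' y = -2 y⁻³ + ψ'' (y + 1)` and the telescoping
bound `ψ' (y + 1) > (y + 1)⁻¹ + (2 (y + 1)²)⁻¹` give `Φ (y + 1) < Φ y`; since `Φ (y + n) → 0`,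
`Φ y > 0`.

The series for `ψ'` comes from `ψ x = ψ 1 + ∑ₖ ((k + 1)⁻¹ - (x + k)⁻¹)`: both sides are monotone on
`(0, ∞)` (the left one by log-convexity of `Γ`) and satisfy `f (x + 1) = f x + x⁻¹`, which
determines `f` up to an additive constant.
-/

open Real Filter Set

/-- The digamma (psi) function: the logarithmic derivative of the gamma function. -/
noncomputable def psi (x : ℝ) : ℝ := deriv (fun t : ℝ => Real.log (Real.Gamma t)) x

open Topology

lemma hasSum_sub_succ_of_antitone {f : ℕ → ℝ} (hf : Antitone f) (h : Tendsto f atTop (𝓝 0)) :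
    HasSum (fun k => f k - f (k + 1)) (f 0) := by
  rw [hasSum_iff_tendsto_nat_of_nonneg fun k => sub_nonneg.2 (hf k.le_succ)]
  simp only [Finset.sum_range_sub']
  simpa using tendsto_const_nhds.sub h

lemma tendsto_inv_add_natCast (x : ℝ) : Tendsto (fun k : ℕ => (x + k)⁻¹) atTop (𝓝 0) :=
  tendsto_inv_atTop_zero.comp (tendsto_atTop_add_const_left _ x tendsto_natCast_atTop_atTop)

lemma hasDerivAt_inv_add_pow (s : ℕ) (c : ℝ) {y : ℝ} (hy : y + c ≠ 0) :
    HasDerivAt (fun y => ((y + c) ^ s)⁻¹) (-s * ((y + c) ^ (s + 1))⁻¹) y := by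
  have h := (hasDerivAt_zpow (-(s : ℤ)) (y + c) (Or.inl hy)).comp_add_const y c
  have e : -(s : ℤ) - 1 = -((s + 1 : ℕ) : ℤ) := by push_cast; ring
  simpa only [e, zpow_neg, zpow_natCast, Int.cast_neg, Int.cast_natCast, neg_mul] using h

lemma hasSum_inv_add_sub_inv_add_succ {x : ℝ} (hx : 0 < x) :
    HasSum (fun k : ℕ => (x + k)⁻¹ - (x + (k + 1 : ℕ))⁻¹) x⁻¹ := by
  simpa using hasSum_sub_succ_of_antitone (f := fun k : ℕ => (x + k)⁻¹)
    (fun m n hmn => by dsimp; gcongr) (tendsto_inv_add_natCast x)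

noncomputable def hurwitzSum (s : ℕ) (x : ℝ) : ℝ := ∑' k : ℕ, ((x + k) ^ s)⁻¹

section HurwitzSum

variable {s : ℕ} {x : ℝ}

lemma summable_inv_add_pow (hs : 2 ≤ s) (hx : 0 < x) :
    Summable fun k : ℕ => ((x + k) ^ s)⁻¹ := by
  refine ((summable_one_div_nat_add_rpow x s).2 (by exact_mod_cast hs)).congr fun k => ?_
  rw [abs_of_pos (by positivity), rpow_natCast, one_div, add_comm]

lemma hurwitzSum_pos (hs : 2 ≤ s) (hx : 0 < x) : 0 < hurwitzSum s x :=
  (summable_inv_add_pow hs hx).tsum_pos (fun k => by positivity) 0 (by positivity)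

lemma hurwitzSum_eq_inv_pow_add (hs : 2 ≤ s) (hx : 0 < x) :
    hurwitzSum s x = (x ^ s)⁻¹ + hurwitzSum s (x + 1) := by
  rw [hurwitzSum, (summable_inv_add_pow hs hx).tsum_eq_zero_add, hurwitzSum]
  push_cast
  simp only [add_zero, add_assoc, add_comm (1 : ℝ)]

lemma hurwitzSum_succ_le (hs : 2 ≤ s) (hx : 0 < x) :
    hurwitzSum (s + 1) x ≤ x⁻¹ * hurwitzSum s x := by
  rw [hurwitzSum, hurwitzSum, ← tsum_mul_left]
  refine (summable_inv_add_pow (by omega) hx).tsum_le_tsum (fun k => ?_)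
    ((summable_inv_add_pow hs hx).mul_left _)
  rw [pow_succ, mul_inv, mul_comm]
  gcongr
  linarith [k.cast_nonneg (α := ℝ)]

lemma hasDerivAt_hurwitzSum (hs : 2 ≤ s) (hx : 0 < x) :
    HasDerivAt (hurwitzSum s) (-s * hurwitzSum (s + 1) x) x := by
  have hx2 : x / 2 < x := by linarith
  rw [hurwitzSum, ← tsum_mul_left]
  refine hasDerivAt_tsum_of_isPreconnected (g := fun (k : ℕ) (y : ℝ) => ((y + k) ^ s)⁻¹)
    (g' := fun k y => -s * ((y + k) ^ (s + 1))⁻¹)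
    ((summable_inv_add_pow (by omega : 2 ≤ s + 1) (half_pos hx)).mul_left (s : ℝ))
    isOpen_Ioi isPreconnected_Ioi (fun k y hy => ?_) (fun k y hy => ?_) hx2
    (summable_inv_add_pow hs hx) hx2
  all_goals have : 0 < y := (half_pos hx).trans hy
  · exact hasDerivAt_inv_add_pow s k (by positivity)
  · rw [norm_mul, norm_neg, Real.norm_natCast, norm_inv, Real.norm_of_nonneg (by positivity)]
    gcongr
    exact hy.le

lemma hurwitzSum_two_add_one_le (hx : 0 < x) : hurwitzSum 2 (x + 1) ≤ x⁻¹ := by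
  have htel := hasSum_inv_add_sub_inv_add_succ hx
  refine (summable_inv_add_pow le_rfl (by linarith)).tsum_le_tsum (fun k => ?_) htel.summable
    |>.trans_eq htel.tsum_eq
  have hk : 0 < x + k := by positivity
  push_cast
  rw [inv_sub_inv (by positivity) (by positivity)]
  field_simp
  nlinarith

lemma inv_add_inv_two_mul_sq_lt_hurwitzSum_two (hx : 0 < x) :
    x⁻¹ + (2 * x ^ 2)⁻¹ < hurwitzSum 2 x := by
  set f : ℕ → ℝ := fun k => (x + k)⁻¹ + (2 * (x + k) ^ 2)⁻¹
  have hdiff (k : ℕ) :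
      f k - f (k + 1) = ((x + k) ^ 2)⁻¹ - (2 * (x + k) ^ 2 * (x + k + 1) ^ 2)⁻¹ := by
    have hk : 0 < x + k := by positivity
    simp only [f]
    push_cast
    field_simp
    ring
  have hf0 : Tendsto f atTop (𝓝 0) := by
    have h2 := ((tendsto_inv_add_natCast x).pow 2).const_mul 2⁻¹
    simpa [f, mul_inv, mul_comm] using (tendsto_inv_add_natCast x).add h2
  have htel := hasSum_sub_succ_of_antitone (fun m n hmn => by dsimp [f]; gcongr) hf0
  have hlt (k : ℕ) : f k - f (k + 1) < ((x + k) ^ 2)⁻¹ := by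
    have hk : 0 < x + k := by positivity
    rw [hdiff]
    linarith [show 0 < (2 * (x + k) ^ 2 * (x + k + 1) ^ 2)⁻¹ by positivity]
  have := htel.summable.tsum_lt_tsum (fun k => (hlt k).le) (hlt 0)
    (summable_inv_add_pow le_rfl hx)
  rw [htel.tsum_eq] at this
  simpa [f, hurwitzSum] using this

lemma tendsto_hurwitzSum_atTop (hs : 2 ≤ s) : Tendsto (hurwitzSum s) atTop (𝓝 0) := by
  induction s, hs using Nat.le_induction with
  | base =>
    refine tendsto_of_tendsto_of_tendsto_of_le_of_le' tendsto_const_nhds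
      (tendsto_inv_atTop_zero.comp (tendsto_atTop_add_const_right _ (-1) tendsto_id)) ?_ ?_
    · filter_upwards [eventually_gt_atTop 0] with y hy using (hurwitzSum_pos le_rfl hy).le
    · filter_upwards [eventually_gt_atTop 1] with y hy
      simpa using hurwitzSum_two_add_one_le (x := y + -1) (by linarith)
  | succ s hs ih =>
    refine tendsto_of_tendsto_of_tendsto_of_le_of_le' tendsto_const_nhds
      (by simpa using tendsto_inv_atTop_zero.mul ih) ?_ ?_
    · filter_upwards [eventually_gt_atTop 0] with y hy using (hurwitzSum_pos (by omega) hy).le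
    · filter_upwards [eventually_gt_atTop 0] with y hy using hurwitzSum_succ_le hs hy

lemma sq_hurwitzSum_two_sub_lt (hx : 0 < x) :
    hurwitzSum 2 (x + 1) ^ 2 - 2 * hurwitzSum 3 (x + 1) <
      hurwitzSum 2 x ^ 2 - 2 * hurwitzSum 3 x := by
  rw [hurwitzSum_eq_inv_pow_add le_rfl hx, hurwitzSum_eq_inv_pow_add (by norm_num) hx]
  have hlow := mul_lt_mul_of_pos_left (inv_add_inv_two_mul_sq_lt_hurwitzSum_two
    (x := x + 1) (by positivity)) (by positivity : 0 < 2 * (x ^ 2)⁻¹)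
  have hgap : 2 * (x ^ 2)⁻¹ * ((x + 1)⁻¹ + (2 * (x + 1) ^ 2)⁻¹) + ((x ^ 2)⁻¹) ^ 2 - 2 * (x ^ 3)⁻¹
      = (x ^ 4 * (x + 1) ^ 2)⁻¹ := by
    field_simp
    ring
  nlinarith [show 0 < (x ^ 4 * (x + 1) ^ 2)⁻¹ by positivity]

lemma sq_hurwitzSum_two_sub_pos (hx : 0 < x) : 0 < hurwitzSum 2 x ^ 2 - 2 * hurwitzSum 3 x := by
  set g : ℕ → ℝ := fun n => hurwitzSum 2 (x + n) ^ 2 - 2 * hurwitzSum 3 (x + n)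
  have hanti : Antitone g := antitone_nat_of_succ_le fun n => by
    simpa [g, add_assoc] using (sq_hurwitzSum_two_sub_lt (x := x + n) (by positivity)).le
  have hlim : Tendsto g atTop (𝓝 0) := by
    have h : Tendsto (fun y => hurwitzSum 2 y ^ 2 - 2 * hurwitzSum 3 y) atTop (𝓝 0) := by
      simpa using ((tendsto_hurwitzSum_atTop le_rfl).pow 2).sub
        ((tendsto_hurwitzSum_atTop (by norm_num : 2 ≤ 3)).const_mul 2)
    exact h.comp (tendsto_atTop_add_const_left _ x tendsto_natCast_atTop_atTop)
  have := hanti.le_of_tendsto hlim 1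
  simp only [g, Nat.cast_one] at this
  linarith [sq_hurwitzSum_two_sub_lt hx]

end HurwitzSum

lemma eqOn_Ioi_of_monotoneOn_of_add_one_eq {f g : ℝ → ℝ} (hf : MonotoneOn f (Ioi 0))
    (hg : MonotoneOn g (Ioi 0)) (hf1 : ∀ x, 0 < x → f (x + 1) = f x + x⁻¹)
    (hg1 : ∀ x, 0 < x → g (x + 1) = g x + x⁻¹) (h1 : f 1 = g 1) : EqOn f g (Ioi 0) := by
  have hshift (y : ℝ) (hy : 0 < y) (n : ℕ) : f (y + n) - g (y + n) = f y - g y := by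
    induction n with
    | zero => simp
    | succ n ih =>
      push_cast
      rw [← add_assoc, hf1 _ (by positivity), hg1 _ (by positivity)]
      linarith
  -- `f - g` is 1-periodic, while on each `[y, y + 1]` both `f` and `g` vary by at most `y⁻¹`.
  have hsqueeze (φ : ℝ → ℝ) (hφ : MonotoneOn φ (Ioi 0))
      (hφ1 : ∀ x, 0 < x → φ (x + 1) = φ x + x⁻¹) {y z : ℝ} (hy : 0 < y) (hyz : y ≤ z)
      (hzy : z ≤ y + 1) : φ y ≤ φ z ∧ φ z ≤ φ y + y⁻¹ := by
    refine ⟨hφ hy (hy.trans_le hyz) hyz, ?_⟩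
    rw [← hφ1 y hy]
    exact hφ (hy.trans_le hyz) (show (0 : ℝ) < y + 1 by linarith) hzy
  intro x (hx : 0 < x)
  have hbound (n : ℕ) : |f x - g x| ≤ 1 / ((n : ℝ) + 1) := by
    set y : ℝ := ⌊x⌋₊ + ((n : ℝ) + 1)
    have hny : (n : ℝ) + 1 ≤ y := le_add_of_nonneg_left (Nat.cast_nonneg _)
    have hyz : y ≤ x + ((n : ℝ) + 1) := by linarith [Nat.floor_le hx.le]
    have hzy : x + ((n : ℝ) + 1) ≤ y + 1 := by linarith [Nat.lt_floor_add_one x]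
    obtain ⟨hf₁, hf₂⟩ := hsqueeze f hf hf1 (by positivity) hyz hzy
    obtain ⟨hg₁, hg₂⟩ := hsqueeze g hg hg1 (by positivity) hyz hzy
    have hx' : f (x + ((n : ℝ) + 1)) - g (x + ((n : ℝ) + 1)) = f x - g x := by
      exact_mod_cast hshift x hx (n + 1)
    have hy' : f y - g y = 0 := by
      have := hshift 1 one_pos (⌊x⌋₊ + n)
      rw [h1, sub_self] at this
      convert this using 3 <;> push_cast <;> ring
    have hyinv : y⁻¹ ≤ 1 / ((n : ℝ) + 1) := by
      rw [one_div]
      gcongr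
    rw [abs_le]
    constructor <;> linarith
  have : |f x - g x| ≤ 0 := ge_of_tendsto' tendsto_one_div_add_atTop_nhds_zero_nat hbound
  exact sub_eq_zero.1 (abs_nonpos_iff.1 this)

section Digamma

variable {x : ℝ}

lemma differentiableAt_log_Gamma (hx : 0 < x) : DifferentiableAt ℝ (fun t => log (Gamma t)) x :=
  (differentiableAt_Gamma fun m => by linarith [m.cast_nonneg (α := ℝ)]).log
    (Gamma_pos_of_pos hx).ne'

lemma psi_add_one (hx : 0 < x) : psi (x + 1) = psi x + x⁻¹ := by
  have h : (fun t => log (Gamma (t + 1))) =ᶠ[𝓝 x] fun t => log (Gamma t) + log t := by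
    filter_upwards [eventually_gt_nhds hx] with t ht
    rw [Gamma_add_one ht.ne', log_mul ht.ne' (Gamma_pos_of_pos ht).ne', add_comm]
  rw [psi, ← deriv_comp_add_const, h.deriv_eq,
    deriv_fun_add (differentiableAt_log_Gamma hx) (differentiableAt_log hx.ne'), deriv_log, psi]

lemma monotoneOn_psi : MonotoneOn psi (Ioi 0) :=
  convexOn_log_Gamma.monotoneOn_deriv fun _ hx => differentiableAt_log_Gamma hx

-- The Weierstrass series `ψ x + γ`.
noncomputable def digammaSeries (x : ℝ) : ℝ := ∑' k : ℕ, (((k : ℝ) + 1)⁻¹ - (x + k)⁻¹)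

lemma summable_digammaSeries (hx : 0 < x) :
    Summable fun k : ℕ => ((k : ℝ) + 1)⁻¹ - (x + k)⁻¹ := by
  refine Summable.of_norm_bounded (((summable_inv_add_pow le_rfl one_pos).add
    (summable_inv_add_pow le_rfl hx)).mul_left |x - 1|) fun k => ?_
  have ha : 0 < (k : ℝ) + 1 := by positivity
  have hb : 0 < x + k := by positivity
  have hdiff : ((k : ℝ) + 1)⁻¹ - (x + k)⁻¹ = (x - 1) * (((k : ℝ) + 1)⁻¹ * (x + k)⁻¹) := by
    field_simp
    ring
  rw [hdiff, norm_mul, Real.norm_eq_abs, Real.norm_of_nonneg (by positivity), add_comm (1 : ℝ)]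
  gcongr
  nlinarith [sq_nonneg (((k : ℝ) + 1)⁻¹ - (x + k)⁻¹), inv_pow ((k : ℝ) + 1) 2, inv_pow (x + k) 2]

lemma digammaSeries_one : digammaSeries 1 = 0 := by
  simp [digammaSeries, add_comm]

lemma digammaSeries_add_one (hx : 0 < x) : digammaSeries (x + 1) = digammaSeries x + x⁻¹ := by
  have h := (summable_digammaSeries (by positivity : 0 < x + 1)).hasSum.sub
    (summable_digammaSeries hx).hasSum
  have htel := hasSum_inv_add_sub_inv_add_succ hx
  rw [← sub_eq_iff_eq_add']
  refine h.unique (htel.congr_fun fun k => ?_)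
  push_cast
  ring

lemma monotoneOn_digammaSeries : MonotoneOn digammaSeries (Ioi 0) := by
  intro x (hx : 0 < x) y (hy : 0 < y) hxy
  refine (summable_digammaSeries hx).tsum_le_tsum (fun k => ?_) (summable_digammaSeries hy)
  gcongr

lemma hasDerivAt_digammaSeries (hx : 0 < x) :
    HasDerivAt digammaSeries (hurwitzSum 2 x) x := by
  have hx2 : x / 2 < x := by linarith
  refine hasDerivAt_tsum_of_isPreconnected
    (g := fun (k : ℕ) (y : ℝ) => ((k : ℝ) + 1)⁻¹ - (y + k)⁻¹) (g' := fun k y => ((y + k) ^ 2)⁻¹)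
    (summable_inv_add_pow le_rfl (half_pos hx)) isOpen_Ioi isPreconnected_Ioi
    (fun k y hy => ?_) (fun k y hy => ?_) hx2 (summable_digammaSeries hx) hx2
  all_goals have : 0 < y := (half_pos hx).trans hy
  · simpa using (hasDerivAt_inv_add_pow 1 k (by positivity : y + k ≠ 0)).const_sub _
  · rw [norm_inv, norm_pow, Real.norm_of_nonneg (by positivity)]
    gcongr
    exact hy.le

lemma psi_eq_psi_one_add_digammaSeries (hx : 0 < x) : psi x = psi 1 + digammaSeries x :=
  eqOn_Ioi_of_monotoneOn_of_add_one_eq monotoneOn_psi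
    (monotoneOn_digammaSeries.const_add (psi 1)) (fun _ hy => psi_add_one hy)
    (fun y hy => by rw [digammaSeries_add_one hy, add_assoc]) (by simp [digammaSeries_one]) hx

lemma hasDerivAt_psi (hx : 0 < x) : HasDerivAt psi (hurwitzSum 2 x) x :=
  ((hasDerivAt_digammaSeries hx).const_add (psi 1)).congr_of_eventuallyEq <| by
    filter_upwards [eventually_gt_nhds hx] with y hy using psi_eq_psi_one_add_digammaSeries hy

end Digamma

lemma strictConvexOn_of_hasDerivAt_of_hasDerivAt_pos {D : Set ℝ} (hD : Convex ℝ D)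
    (hDo : IsOpen D) {f f' f'' : ℝ → ℝ} (hf : ∀ x ∈ D, HasDerivAt f (f' x) x)
    (hf' : ∀ x ∈ D, HasDerivAt f' (f'' x) x) (hf'' : ∀ x ∈ D, 0 < f'' x) :
    StrictConvexOn ℝ D f := by
  have hmono : StrictMonoOn f' D := strictMonoOn_of_hasDerivWithinAt_pos hD
    (fun x hx => (hf' x hx).continuousAt.continuousWithinAt)
    (fun x hx => (hf' x (interior_subset hx)).hasDerivWithinAt)
    (fun x hx => hf'' x (interior_subset hx))
  refine StrictMonoOn.strictConvexOn_of_deriv hD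
    (fun x hx => (hf x hx).continuousAt.continuousWithinAt) ?_
  rw [hDo.interior_eq]
  intro x hx y hy hxy
  rw [(hf x hx).deriv, (hf y hy).deriv]
  exact hmono hx hy hxy

theorem Q_strictConvexOn :
    StrictConvexOn ℝ (Set.Ioi (-1 : ℝ)) (fun x : ℝ => Real.exp (psi (x + 1)) - x) := by
  have hpos {x : ℝ} (hx : x ∈ Ioi (-1 : ℝ)) : 0 < x + 1 := by linarith [mem_Ioi.1 hx]
  have hpsi {x : ℝ} (hx : x ∈ Ioi (-1 : ℝ)) :
      HasDerivAt (fun y => psi (y + 1)) (hurwitzSum 2 (x + 1)) x :=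
    (hasDerivAt_psi (hpos hx)).comp_add_const x 1
  have hS {x : ℝ} (hx : x ∈ Ioi (-1 : ℝ)) :
      HasDerivAt (fun y => hurwitzSum 2 (y + 1)) (-2 * hurwitzSum 3 (x + 1)) x := by
    simpa using (hasDerivAt_hurwitzSum le_rfl (hpos hx)).comp_add_const x 1
  refine strictConvexOn_of_hasDerivAt_of_hasDerivAt_pos (convex_Ioi _) isOpen_Ioi
    (f' := fun x => exp (psi (x + 1)) * hurwitzSum 2 (x + 1) - 1)
    (f'' := fun x => exp (psi (x + 1)) * (hurwitzSum 2 (x + 1) ^ 2 - 2 * hurwitzSum 3 (x + 1)))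
    (fun x hx => (hpsi hx).exp.sub (hasDerivAt_id' x))
    (fun x hx => ((hpsi hx).exp.mul (hS hx)).sub_const 1 |>.congr_deriv (by ring))
    (fun x hx => mul_pos (exp_pos _) (sq_hurwitzSum_two_sub_pos (hpos hx)))
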